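/- arXiv:2412.01362 — 5 statements merged into one kernel-verified Lean document; each statement's English description precedes it below -/
import Mathlib

section
/- (Lemma A.5) Let n ≥ 2, t > 0, x ∈ ℝ^{n−1}, and let g : [0,t] × ℝ^{n−1} → ℝ be smooth such that for every multi-index γ there is C > 0 with |D^γ g(s,y)| ≤ C·e^{C|y|} for all s ∈ [0,t] and y ∈ ℝ^{n−1}. Then the iterated integral ∫₀ᵗ ∫_{ℝ^{n−1}} (g(s,y) − g(s,x)) · exp(−|x−y|²/(4(t−s)))/((t−s)·(4π(t−s))^{n/2}) dy ds exists: for each s ∈ (0,t) the inner integral over y converges, and the resulting function of s is integrable on (0,t). -/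
open Real MeasureTheory Set Topology

variable {m : ℕ}

local notation "E" => EuclideanSpace ℝ (Fin m)

lemma gauss_integral {b : ℝ} (hb : 0 < b) (x : EuclideanSpace ℝ (Fin m)) :
    ∫ y : E, Real.exp (-b * ‖y - x‖ ^ 2) = (π / b) ^ ((m : ℝ) / 2) := by
  rw [integral_sub_right_eq_self (fun v : E => Real.exp (-b * ‖v‖ ^ 2)) x]
  rw [GaussianFourier.integral_rexp_neg_mul_sq_norm hb]
  norm_num [finrank_euclideanSpace_fin]

lemma gauss_integrable {b : ℝ} (hb : 0 < b) (x : EuclideanSpace ℝ (Fin m)) :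
    Integrable (fun y : E => Real.exp (-b * ‖y - x‖ ^ 2)) := by
  have h0 : Integrable (fun v : E => Real.exp (-b * ‖v‖ ^ 2)) := by
    have := (GaussianFourier.integrable_cexp_neg_mul_sq_norm_add (V := E)
      (b := (b : ℂ)) (by simpa using hb) 0 0).norm
    refine this.congr ?_
    filter_upwards with v
    simp [Complex.norm_exp]
    left
    norm_cast
  exact h0.comp_sub_right x

lemma expgauss_integrable {b : ℝ} (c : ℝ) (hb : 0 < b) (x : EuclideanSpace ℝ (Fin m)) :
    Integrable (fun y : E => Real.exp (c * ‖y‖) * Real.exp (-b * ‖y - x‖ ^ 2)) := by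
  have hcont : Continuous (fun y : E => Real.exp (c * ‖y‖) * Real.exp (-b * ‖y - x‖ ^ 2)) := by
    fun_prop
  refine Integrable.mono' (((gauss_integrable (half_pos hb) x).const_mul
    (Real.exp (|c| * ‖x‖ + c ^ 2 / (2 * b)))) ) hcont.aestronglyMeasurable ?_
  filter_upwards with y
  rw [norm_mul, norm_of_nonneg (Real.exp_nonneg _), norm_of_nonneg (Real.exp_nonneg _),
    ← Real.exp_add, ← Real.exp_add]
  apply Real.exp_le_exp.2
  have h1 : c * ‖y‖ ≤ |c| * ‖x‖ + |c| * ‖y - x‖ := by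
    have : c * ‖y‖ ≤ |c| * ‖y‖ := by
      apply mul_le_mul_of_nonneg_right (le_abs_self c) (norm_nonneg _)
    have h2 : ‖y‖ ≤ ‖x‖ + ‖y - x‖ := by
      calc ‖y‖ = ‖x + (y - x)‖ := by rw [add_sub_cancel]
      _ ≤ ‖x‖ + ‖y - x‖ := norm_add_le _ _
    nlinarith [abs_nonneg c, norm_nonneg (y - x), norm_nonneg y]
  have h3 : |c| * ‖y - x‖ ≤ c ^ 2 / (2 * b) + b / 2 * ‖y - x‖ ^ 2 := by
    rw [← sub_nonneg, ← sq_abs c]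
    have h4 : |c| ^ 2 / (2 * b) + b / 2 * ‖y - x‖ ^ 2 - |c| * ‖y - x‖
        = (|c| - b * ‖y - x‖) ^ 2 / (2 * b) := by field_simp; ring
    rw [h4]
    positivity
  nlinarith

lemma taylor_bound {f : EuclideanSpace ℝ (Fin m) → ℝ} (x y : EuclideanSpace ℝ (Fin m))
    {C : ℝ} (hf : ∀ z, ContDiffAt ℝ (⊤ : ℕ∞) f z)
    (hd2 : ∀ z, ‖iteratedFDeriv ℝ 2 f z‖ ≤ C * Real.exp (C * ‖z‖)) (hC : 0 ≤ C) :
    |f y - f x - fderiv ℝ f x (y - x)| ≤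
      C * Real.exp (C * (‖x‖ + ‖y - x‖)) * ‖y - x‖ ^ 2 := by
  set r := ‖y - x‖ with hr
  set B := Metric.closedBall x r with hB
  set M := C * Real.exp (C * (‖x‖ + r)) with hM
  have hdiff : ∀ z, DifferentiableAt ℝ f z := fun z => (hf z).differentiableAt (by simp)
  have hdiff2 : ∀ z, DifferentiableAt ℝ (fderiv ℝ f) z := fun z =>
    ((hf z).fderiv_right (m := 1) (WithTop.coe_le_coe.2 le_top)).differentiableAt one_ne_zero
  have e1 : ∀ w, ‖fderiv ℝ (fderiv ℝ f) w‖ = ‖iteratedFDeriv ℝ 2 f w‖ := by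
    intro w
    calc ‖fderiv ℝ (fderiv ℝ f) w‖ = ‖iteratedFDeriv ℝ 0 (fderiv ℝ (fderiv ℝ f)) w‖ := by
          rw [norm_iteratedFDeriv_zero]
      _ = ‖iteratedFDeriv ℝ 1 (fderiv ℝ f) w‖ := norm_iteratedFDeriv_fderiv
      _ = ‖iteratedFDeriv ℝ 2 f w‖ := norm_iteratedFDeriv_fderiv
  have hwB : ∀ w ∈ B, ‖w‖ ≤ ‖x‖ + r := by
    intro w hw
    have : ‖w - x‖ ≤ r := by simpa [hB, dist_eq_norm] using hw
    calc ‖w‖ = ‖x + (w - x)‖ := by rw [add_sub_cancel]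
      _ ≤ ‖x‖ + ‖w - x‖ := norm_add_le _ _
      _ ≤ ‖x‖ + r := by linarith
  have step1 : ∀ z ∈ B, ‖fderiv ℝ f z - fderiv ℝ f x‖ ≤ M * ‖z - x‖ := by
    intro z hz
    refine (convex_closedBall x r).norm_image_sub_le_of_norm_fderiv_le
      (fun w _ => hdiff2 w) (fun w hw => ?_) (Metric.mem_closedBall_self ?_) hz
    · rw [e1]
      refine (hd2 w).trans ?_
      exact mul_le_mul_of_nonneg_left (Real.exp_le_exp.2
        (mul_le_mul_of_nonneg_left (hwB w hw) hC)) hC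
    · positivity
  have hydist : y ∈ B := by simp [hB, dist_eq_norm, hr]
  set φ : EuclideanSpace ℝ (Fin m) → ℝ := fun z => f z - fderiv ℝ f x z with hφ
  have hφdiff : ∀ z, DifferentiableAt ℝ φ z := fun z =>
    (hdiff z).sub (fderiv ℝ f x).differentiableAt
  have hφd : ∀ z, fderiv ℝ φ z = fderiv ℝ f z - fderiv ℝ f x := by
    intro z
    rw [hφ]
    rw [fderiv_fun_sub (hdiff z) (fderiv ℝ f x).differentiableAt,
      (fderiv ℝ f x).fderiv]
  have step2 : ‖φ y - φ x‖ ≤ M * r * ‖y - x‖ := by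
    refine (convex_closedBall x r).norm_image_sub_le_of_norm_fderiv_le
      (fun w _ => hφdiff w) (fun w hw => ?_) (Metric.mem_closedBall_self (by positivity)) hydist
    rw [hφd w]
    refine (step1 w hw).trans ?_
    have : ‖w - x‖ ≤ r := by simpa [hB, dist_eq_norm] using hw
    have hM0 : 0 ≤ M := by positivity
    nlinarith
  have hval : φ y - φ x = f y - f x - fderiv ℝ f x (y - x) := by
    simp only [hφ, map_sub]
    ring
  rw [← Real.norm_eq_abs, ← hval]
  calc ‖φ y - φ x‖ ≤ M * r * ‖y - x‖ := step2
    _ = M * r ^ 2 := by rw [← hr]; ring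

lemma odd_gauss_zero {b : ℝ} (x : EuclideanSpace ℝ (Fin m)) (D : EuclideanSpace ℝ (Fin m) →L[ℝ] ℝ)
    (den : ℝ) :
    ∫ y : E, D (y - x) * Real.exp (-b * ‖y - x‖ ^ 2) / den = 0 := by
  have h1 : ∫ y : E, D (y - x) * Real.exp (-b * ‖y - x‖ ^ 2) / den
      = ∫ z : E, D z * Real.exp (-b * ‖z‖ ^ 2) / den :=
    integral_sub_right_eq_self (fun z : E => D z * Real.exp (-b * ‖z‖ ^ 2) / den) x
  have h2 : ∫ z : E, D z * Real.exp (-b * ‖z‖ ^ 2) / den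
      = ∫ z : E, D (-z) * Real.exp (-b * ‖-z‖ ^ 2) / den :=
    (integral_neg_eq_self (fun z : E => D z * Real.exp (-b * ‖z‖ ^ 2) / den) volume).symm
  have h3 : ∫ z : E, D (-z) * Real.exp (-b * ‖-z‖ ^ 2) / den
      = - ∫ z : E, D z * Real.exp (-b * ‖z‖ ^ 2) / den := by
    rw [← integral_neg]
    congr 1 with z
    rw [map_neg, norm_neg]
    ring
  rw [h1]
  linarith [h2.trans h3]

lemma scalar_est {C τ r tt : ℝ} (hC : 0 < C) (hτ : 0 < τ) (hτt : τ ≤ tt) (hr : 0 ≤ r) :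
    Real.exp (C * r) * r ^ 2 * Real.exp (-r ^ 2 / (4 * τ)) ≤
      16 * Real.exp (4 * C ^ 2 * tt) * τ * Real.exp (-(1 / (16 * τ)) * r ^ 2) := by
  have key2 : r ^ 2 * Real.exp (-(1 / (16 * τ)) * r ^ 2) ≤ 16 * τ := by
    have hu : 0 ≤ r ^ 2 / (16 * τ) := by positivity
    have h1 : r ^ 2 / (16 * τ) ≤ Real.exp (r ^ 2 / (16 * τ)) := by
      linarith [Real.add_one_le_exp (r ^ 2 / (16 * τ))]
    have h2 : r ^ 2 * Real.exp (-(1 / (16 * τ)) * r ^ 2)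
        = 16 * τ * (r ^ 2 / (16 * τ) * Real.exp (-(r ^ 2 / (16 * τ)))) := by
      field_simp
    rw [h2]
    have h3 : r ^ 2 / (16 * τ) * Real.exp (-(r ^ 2 / (16 * τ))) ≤ 1 := by
      rw [Real.exp_neg, mul_inv_le_iff₀ (Real.exp_pos _), one_mul]
      exact h1
    nlinarith [mul_pos (by norm_num : (0:ℝ) < 16) hτ]
  calc Real.exp (C * r) * r ^ 2 * Real.exp (-r ^ 2 / (4 * τ))
      = r ^ 2 * Real.exp (C * r + -r ^ 2 / (4 * τ)) := by rw [Real.exp_add]; ring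
    _ ≤ r ^ 2 * Real.exp (4 * C ^ 2 * tt + (-(1 / (16 * τ)) * r ^ 2 + -(1 / (16 * τ)) * r ^ 2)) := by
        apply mul_le_mul_of_nonneg_left _ (by positivity)
        apply Real.exp_le_exp.2
        rw [← sub_nonpos]
        have hexp : C * r + -r ^ 2 / (4 * τ)
            - (4 * C ^ 2 * tt + (-(1 / (16 * τ)) * r ^ 2 + -(1 / (16 * τ)) * r ^ 2))
            = (16 * τ * (C * r) - 2 * r ^ 2 - 64 * C ^ 2 * tt * τ) / (16 * τ) := by
          field_simp
          ring
        rw [hexp]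
        apply div_nonpos_of_nonpos_of_nonneg _ (by positivity)
        nlinarith [sq_nonneg (r - 8 * C * τ), sq_nonneg r,
          mul_le_mul_of_nonneg_left hτt (show (0:ℝ) ≤ 64 * C ^ 2 * τ by positivity)]
    _ = Real.exp (4 * C ^ 2 * tt) * (r ^ 2 * Real.exp (-(1 / (16 * τ)) * r ^ 2))
          * Real.exp (-(1 / (16 * τ)) * r ^ 2) := by rw [Real.exp_add, Real.exp_add]; ring
    _ ≤ Real.exp (4 * C ^ 2 * tt) * (16 * τ) * Real.exp (-(1 / (16 * τ)) * r ^ 2) := by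
        apply mul_le_mul_of_nonneg_right _ (Real.exp_nonneg _)
        exact mul_le_mul_of_nonneg_left key2 (Real.exp_nonneg _)
    _ = 16 * Real.exp (4 * C ^ 2 * tt) * τ * Real.exp (-(1 / (16 * τ)) * r ^ 2) := by ring

lemma rpow_crunch (a b : ℝ) {τ : ℝ} (hτ : 0 < τ) (hab : b = a + 1 / 2) :
    τ / (τ * (4 * π * τ) ^ b) * (16 * π * τ) ^ a
      = ((16 * π) ^ a / (4 * π) ^ b) * τ ^ (-(1 / 2) : ℝ) := by
  have hπ := Real.pi_pos
  rw [Real.mul_rpow (by positivity) hτ.le, Real.mul_rpow (by positivity) hτ.le]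
  have e2 : τ * τ ^ a = τ ^ (1 + a) := by rw [Real.rpow_add hτ, Real.rpow_one]
  have e3 : τ * τ ^ b = τ ^ (1 + b) := by rw [Real.rpow_add hτ, Real.rpow_one]
  have e4 : τ ^ (1 + a) / τ ^ (1 + b) = τ ^ (-(1 / 2) : ℝ) := by
    rw [← Real.rpow_sub hτ]
    congr 1
    rw [hab]; ring
  calc τ / (τ * ((4 * π) ^ b * τ ^ b)) * ((16 * π) ^ a * τ ^ a)
      = ((16 * π) ^ a / (4 * π) ^ b) * (τ * τ ^ a / (τ * τ ^ b)) := by ring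
    _ = ((16 * π) ^ a / (4 * π) ^ b) * τ ^ (-(1 / 2) : ℝ) := by rw [e2, e3, e4]

/-- (Lemma A.5) For a smooth boundary temperature `g` on `[0,t] × ℝ^{n−1}`
whose derivatives of every order grow at most exponentially, the iterated
integral defining the multi-dimensional component of the temperature-to-flux
formula exists: for each `s ∈ (0,t)` the inner integral over `y` converges,
and the resulting function of `s` is integrable on `(0,t)`. -/
theorem multi_dimensional_component_integrable (n : ℕ) (hn : 2 ≤ n)
    (t : ℝ) (ht : 0 < t) (x : EuclideanSpace ℝ (Fin (n - 1)))
    (g : ℝ → EuclideanSpace ℝ (Fin (n - 1)) → ℝ)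
    (hsmooth : ContDiffOn ℝ (⊤ : ℕ∞)
      (fun p : ℝ × EuclideanSpace ℝ (Fin (n - 1)) => g p.1 p.2)
      (Icc 0 t ×ˢ univ))
    (hgrowth : ∀ k : ℕ, ∃ C : ℝ, 0 < C ∧ ∀ s ∈ Icc (0:ℝ) t,
      ∀ y : EuclideanSpace ℝ (Fin (n - 1)),
        ‖iteratedFDeriv ℝ k (g s) y‖ ≤ C * Real.exp (C * ‖y‖)) :
    (∀ s ∈ Ioo (0:ℝ) t,
      Integrable (fun y : EuclideanSpace ℝ (Fin (n - 1)) =>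
        (g s y - g s x) * Real.exp (-‖x - y‖ ^ 2 / (4 * (t - s)))
          / ((t - s) * (4 * π * (t - s)) ^ ((n : ℝ) / 2))))
    ∧ IntegrableOn (fun s =>
        ∫ y : EuclideanSpace ℝ (Fin (n - 1)),
          (g s y - g s x) * Real.exp (-‖x - y‖ ^ 2 / (4 * (t - s)))
            / ((t - s) * (4 * π * (t - s)) ^ ((n : ℝ) / 2))) (Ioo 0 t) := by
  have hπ := Real.pi_pos
  obtain ⟨C0, hC0, hg0⟩ := hgrowth 0
  obtain ⟨C2, hC2, hg2⟩ := hgrowth 2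
  -- pointwise smoothness in the interior
  have hcd : ∀ s ∈ Ioo (0:ℝ) t, ∀ z, ContDiffAt ℝ (⊤ : ℕ∞) (g s) z := by
    intro s hs z
    have hnhds : Icc 0 t ×ˢ (univ : Set (EuclideanSpace ℝ (Fin (n - 1)))) ∈ 𝓝 (s, z) := by
      have h1 : Ioo 0 t ×ˢ (univ : Set (EuclideanSpace ℝ (Fin (n - 1)))) ∈ 𝓝 (s, z) :=
        (isOpen_Ioo.prod isOpen_univ).mem_nhds (by simp [hs.1, hs.2])
      exact Filter.mem_of_superset h1 (prod_mono Ioo_subset_Icc_self subset_rfl)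
    exact (hsmooth.contDiffAt hnhds).comp z (contDiffAt_const.prodMk contDiffAt_id)
  have hdenpos : ∀ s ∈ Ioo (0:ℝ) t,
      0 < (t - s) * (4 * π * (t - s)) ^ ((n : ℝ) / 2) := by
    intro s hs
    have hτ : 0 < t - s := sub_pos.2 hs.2
    positivity
  have hptw : ∀ s : ℝ, ∀ y : EuclideanSpace ℝ (Fin (n - 1)),
      Real.exp (-‖x - y‖ ^ 2 / (4 * (t - s)))
        = Real.exp (-(1 / (4 * (t - s))) * ‖y - x‖ ^ 2) := by
    intro s y
    congr 1
    rw [norm_sub_rev]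
    ring
  have part1 : ∀ s ∈ Ioo (0:ℝ) t,
      Integrable (fun y : EuclideanSpace ℝ (Fin (n - 1)) =>
        (g s y - g s x) * Real.exp (-‖x - y‖ ^ 2 / (4 * (t - s)))
          / ((t - s) * (4 * π * (t - s)) ^ ((n : ℝ) / 2))) := by
    intro s hs
    have hτ : 0 < t - s := sub_pos.2 hs.2
    set den := (t - s) * (4 * π * (t - s)) ^ ((n : ℝ) / 2) with hden
    have hden0 : 0 < den := hdenpos s hs
    have hgb : ∀ z, |g s z| ≤ C0 * Real.exp (C0 * ‖z‖) := by
      intro z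
      have := hg0 s (Ioo_subset_Icc_self hs) z
      rwa [norm_iteratedFDeriv_zero, Real.norm_eq_abs] at this
    have hgc : Continuous (g s) :=
      continuous_iff_continuousAt.2 fun z => (hcd s hs z).continuousAt
    refine Integrable.mono'
      ((expgauss_integrable C0 (show (0:ℝ) < 1 / (4 * (t - s)) by positivity) x).const_mul
        (2 * C0 * Real.exp (C0 * ‖x‖) / den)) ?_ ?_
    · apply Continuous.aestronglyMeasurable
      apply Continuous.div_const
      apply Continuous.mul (hgc.sub continuous_const)
      exact Real.continuous_exp.comp
        (((continuous_const.sub continuous_id).norm.pow 2).neg.div_const _)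
    · filter_upwards with y
      rw [hptw s y, Real.norm_eq_abs, abs_div, abs_mul, abs_of_pos hden0,
        abs_of_nonneg (Real.exp_nonneg _)]
      have e1 : (1:ℝ) ≤ Real.exp (C0 * ‖x‖) := Real.one_le_exp (by positivity)
      have e2 : (1:ℝ) ≤ Real.exp (C0 * ‖y‖) := Real.one_le_exp (by positivity)
      have h1 : |g s y - g s x| ≤ 2 * C0 * Real.exp (C0 * ‖x‖) * Real.exp (C0 * ‖y‖) := by
        calc |g s y - g s x| ≤ |g s y| + |g s x| := abs_sub _ _
          _ ≤ C0 * Real.exp (C0 * ‖y‖) + C0 * Real.exp (C0 * ‖x‖) := by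
              linarith [hgb x, hgb y]
          _ ≤ 2 * C0 * Real.exp (C0 * ‖x‖) * Real.exp (C0 * ‖y‖) := by
              have p1 : C0 * Real.exp (C0 * ‖x‖)
                  ≤ C0 * Real.exp (C0 * ‖x‖) * Real.exp (C0 * ‖y‖) :=
                le_mul_of_one_le_right (by positivity) e2
              have p2 : C0 * Real.exp (C0 * ‖y‖)
                  ≤ C0 * Real.exp (C0 * ‖x‖) * Real.exp (C0 * ‖y‖) :=
                mul_le_mul_of_nonneg_right (le_mul_of_one_le_right hC0.le e1)
                  (Real.exp_nonneg _)
              linarith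
      calc |g s y - g s x| * Real.exp (-(1 / (4 * (t - s))) * ‖y - x‖ ^ 2) / den
          ≤ 2 * C0 * Real.exp (C0 * ‖x‖) * Real.exp (C0 * ‖y‖)
              * Real.exp (-(1 / (4 * (t - s))) * ‖y - x‖ ^ 2) / den := by
            gcongr
        _ = 2 * C0 * Real.exp (C0 * ‖x‖) / den
              * (Real.exp (C0 * ‖y‖) * Real.exp (-(1 / (4 * (t - s))) * ‖y - x‖ ^ 2)) := by
            ring
  refine ⟨part1, ?_⟩
  have hmcast : ((n - 1 : ℕ) : ℝ) = (n : ℝ) - 1 := by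
    rw [Nat.cast_sub (by omega)]
    norm_num
  -- the crucial pointwise bound on the inner integral
  have key : ∀ s ∈ Ioo (0:ℝ) t,
      ‖∫ y : EuclideanSpace ℝ (Fin (n - 1)),
        (g s y - g s x) * Real.exp (-‖x - y‖ ^ 2 / (4 * (t - s)))
          / ((t - s) * (4 * π * (t - s)) ^ ((n : ℝ) / 2))‖
      ≤ (16 * C2 * Real.exp (C2 * ‖x‖) * Real.exp (4 * C2 ^ 2 * t)
          * ((16 * π) ^ (((n - 1 : ℕ) : ℝ) / 2) / (4 * π) ^ ((n : ℝ) / 2)))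
          * (t - s) ^ (-(1/2) : ℝ) := by
    intro s hs
    have hτ : 0 < t - s := sub_pos.2 hs.2
    set den := (t - s) * (4 * π * (t - s)) ^ ((n : ℝ) / 2) with hden
    have hden0 : 0 < den := hdenpos s hs
    set D := fderiv ℝ (g s) x with hD
    set Bc := 16 * C2 * Real.exp (C2 * ‖x‖) * Real.exp (4 * C2 ^ 2 * t) with hBc
    have hBc0 : 0 < Bc := by positivity
    have hFint := part1 s hs
    have hFeq : (fun y : EuclideanSpace ℝ (Fin (n - 1)) =>
        (g s y - g s x) * Real.exp (-‖x - y‖ ^ 2 / (4 * (t - s))) / den)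
        = fun y : EuclideanSpace ℝ (Fin (n - 1)) =>
          (g s y - g s x) * Real.exp (-(1 / (4 * (t - s))) * ‖y - x‖ ^ 2) / den := by
      funext y
      rw [hptw s y]
    have hLint : Integrable (fun y : EuclideanSpace ℝ (Fin (n - 1)) =>
        D (y - x) * Real.exp (-(1 / (4 * (t - s))) * ‖y - x‖ ^ 2) / den) := by
      refine Integrable.mono'
        ((expgauss_integrable 1 (show (0:ℝ) < 1 / (4 * (t - s)) by positivity) x).const_mul
          (‖D‖ * Real.exp ‖x‖ / den)) ?_ ?_
      · apply Continuous.aestronglyMeasurable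
        apply Continuous.div_const
        apply Continuous.mul (D.continuous.comp (continuous_id.sub continuous_const))
        exact Real.continuous_exp.comp
          (continuous_const.mul ((continuous_id.sub continuous_const).norm.pow 2))
      · filter_upwards with y
        rw [Real.norm_eq_abs, abs_div, abs_mul, abs_of_pos hden0,
          abs_of_nonneg (Real.exp_nonneg _)]
        have h1 : |D (y - x)| ≤ ‖D‖ * Real.exp ‖x‖ * Real.exp (1 * ‖y‖) := by
          have h2 : |D (y - x)| ≤ ‖D‖ * ‖y - x‖ := by
            have := D.le_opNorm (y - x)
            rwa [Real.norm_eq_abs] at this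
          have h3 : ‖y - x‖ ≤ ‖x‖ + ‖y‖ := by
            have := norm_sub_le y x
            linarith
          have h4 : ‖x‖ + ‖y‖ ≤ Real.exp (‖x‖ + ‖y‖) := by
            linarith [Real.add_one_le_exp (‖x‖ + ‖y‖)]
          calc |D (y - x)| ≤ ‖D‖ * ‖y - x‖ := h2
            _ ≤ ‖D‖ * Real.exp (‖x‖ + ‖y‖) := by
                apply mul_le_mul_of_nonneg_left _ (norm_nonneg D)
                linarith
            _ = ‖D‖ * Real.exp ‖x‖ * Real.exp (1 * ‖y‖) := by
                rw [one_mul, mul_assoc, ← Real.exp_add]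
        calc |D (y - x)| * Real.exp (-(1 / (4 * (t - s))) * ‖y - x‖ ^ 2) / den
            ≤ ‖D‖ * Real.exp ‖x‖ * Real.exp (1 * ‖y‖)
                * Real.exp (-(1 / (4 * (t - s))) * ‖y - x‖ ^ 2) / den := by
              gcongr
          _ = ‖D‖ * Real.exp ‖x‖ / den
                * (Real.exp (1 * ‖y‖) * Real.exp (-(1 / (4 * (t - s))) * ‖y - x‖ ^ 2)) := by
              ring
    have hLzero : ∫ y : EuclideanSpace ℝ (Fin (n - 1)),
        D (y - x) * Real.exp (-(1 / (4 * (t - s))) * ‖y - x‖ ^ 2) / den = 0 :=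
      odd_gauss_zero x D den
    have hd2 : ∀ z, ‖iteratedFDeriv ℝ 2 (g s) z‖ ≤ C2 * Real.exp (C2 * ‖z‖) :=
      hg2 s (Ioo_subset_Icc_self hs)
    have hrem : ∀ y : EuclideanSpace ℝ (Fin (n - 1)),
        ‖(g s y - g s x) * Real.exp (-(1 / (4 * (t - s))) * ‖y - x‖ ^ 2) / den
          - D (y - x) * Real.exp (-(1 / (4 * (t - s))) * ‖y - x‖ ^ 2) / den‖
        ≤ Bc * (t - s) / den * Real.exp (-(1 / (16 * (t - s))) * ‖y - x‖ ^ 2) := by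
      intro y
      have htay := taylor_bound x y (hcd s hs) hd2 hC2.le
      have heq : (g s y - g s x) * Real.exp (-(1 / (4 * (t - s))) * ‖y - x‖ ^ 2) / den
          - D (y - x) * Real.exp (-(1 / (4 * (t - s))) * ‖y - x‖ ^ 2) / den
          = (g s y - g s x - D (y - x))
              * Real.exp (-(1 / (4 * (t - s))) * ‖y - x‖ ^ 2) / den := by
        ring
      rw [heq, Real.norm_eq_abs, abs_div, abs_mul, abs_of_pos hden0,
        abs_of_nonneg (Real.exp_nonneg _)]
      have hcore : |g s y - g s x - D (y - x)|
            * Real.exp (-(1 / (4 * (t - s))) * ‖y - x‖ ^ 2)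
          ≤ Bc * (t - s) * Real.exp (-(1 / (16 * (t - s))) * ‖y - x‖ ^ 2) := by
        have e1 : -(1 / (4 * (t - s))) * ‖y - x‖ ^ 2 = -‖y - x‖ ^ 2 / (4 * (t - s)) := by
          ring
        rw [e1]
        calc |g s y - g s x - D (y - x)| * Real.exp (-‖y - x‖ ^ 2 / (4 * (t - s)))
            ≤ C2 * Real.exp (C2 * (‖x‖ + ‖y - x‖)) * ‖y - x‖ ^ 2
                * Real.exp (-‖y - x‖ ^ 2 / (4 * (t - s))) :=
              mul_le_mul_of_nonneg_right htay (Real.exp_nonneg _)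
          _ = C2 * Real.exp (C2 * ‖x‖)
                * (Real.exp (C2 * ‖y - x‖) * ‖y - x‖ ^ 2
                    * Real.exp (-‖y - x‖ ^ 2 / (4 * (t - s)))) := by
              rw [mul_add, Real.exp_add]
              ring
          _ ≤ C2 * Real.exp (C2 * ‖x‖)
                * (16 * Real.exp (4 * C2 ^ 2 * t) * (t - s)
                    * Real.exp (-(1 / (16 * (t - s))) * ‖y - x‖ ^ 2)) := by
              apply mul_le_mul_of_nonneg_left _ (by positivity)
              exact scalar_est hC2 hτ (by linarith [hs.1]) (norm_nonneg _)
          _ = Bc * (t - s) * Real.exp (-(1 / (16 * (t - s))) * ‖y - x‖ ^ 2) := by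
              rw [hBc]
              ring
      calc |g s y - g s x - D (y - x)|
            * Real.exp (-(1 / (4 * (t - s))) * ‖y - x‖ ^ 2) / den
          ≤ Bc * (t - s) * Real.exp (-(1 / (16 * (t - s))) * ‖y - x‖ ^ 2) / den := by
            gcongr
        _ = Bc * (t - s) / den * Real.exp (-(1 / (16 * (t - s))) * ‖y - x‖ ^ 2) := by
            ring
    have hgauss : Integrable (fun y : EuclideanSpace ℝ (Fin (n - 1)) =>
        Bc * (t - s) / den * Real.exp (-(1 / (16 * (t - s))) * ‖y - x‖ ^ 2)) :=
      (gauss_integrable (show (0:ℝ) < 1 / (16 * (t - s)) by positivity) x).const_mul _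
    have heq2 : ∫ y : EuclideanSpace ℝ (Fin (n - 1)),
        (g s y - g s x) * Real.exp (-‖x - y‖ ^ 2 / (4 * (t - s))) / den
        = ∫ y : EuclideanSpace ℝ (Fin (n - 1)),
          ((g s y - g s x) * Real.exp (-(1 / (4 * (t - s))) * ‖y - x‖ ^ 2) / den
            - D (y - x) * Real.exp (-(1 / (4 * (t - s))) * ‖y - x‖ ^ 2) / den) := by
      rw [integral_sub (hFeq ▸ hFint) hLint, hLzero, sub_zero, hFeq]
    calc ‖∫ y : EuclideanSpace ℝ (Fin (n - 1)),
          (g s y - g s x) * Real.exp (-‖x - y‖ ^ 2 / (4 * (t - s))) / den‖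
        = ‖∫ y : EuclideanSpace ℝ (Fin (n - 1)),
            ((g s y - g s x) * Real.exp (-(1 / (4 * (t - s))) * ‖y - x‖ ^ 2) / den
              - D (y - x) * Real.exp (-(1 / (4 * (t - s))) * ‖y - x‖ ^ 2) / den)‖ := by
          rw [heq2]
      _ ≤ ∫ y : EuclideanSpace ℝ (Fin (n - 1)),
            Bc * (t - s) / den * Real.exp (-(1 / (16 * (t - s))) * ‖y - x‖ ^ 2) :=
          norm_integral_le_of_norm_le hgauss (Filter.Eventually.of_forall hrem)
      _ = Bc * (t - s) / den * (π / (1 / (16 * (t - s)))) ^ (((n - 1 : ℕ) : ℝ) / 2) := by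
          rw [integral_const_mul, gauss_integral (show (0:ℝ) < 1 / (16 * (t - s)) by positivity) x]
      _ = Bc * ((16 * π) ^ (((n - 1 : ℕ) : ℝ) / 2) / (4 * π) ^ ((n : ℝ) / 2))
            * (t - s) ^ (-(1/2) : ℝ) := by
          have h16 : π / (1 / (16 * (t - s))) = 16 * π * (t - s) := by
            field_simp
          have hcr := rpow_crunch (((n - 1 : ℕ) : ℝ) / 2) ((n : ℝ) / 2) hτ
            (by rw [hmcast]; ring)
          rw [h16, hden]
          rw [show Bc * (t - s) / ((t - s) * (4 * π * (t - s)) ^ ((n : ℝ) / 2))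
                * (16 * π * (t - s)) ^ (((n - 1 : ℕ) : ℝ) / 2)
              = Bc * ((t - s) / ((t - s) * (4 * π * (t - s)) ^ ((n : ℝ) / 2))
                * (16 * π * (t - s)) ^ (((n - 1 : ℕ) : ℝ) / 2)) from by ring, hcr]
          ring
      _ = (16 * C2 * Real.exp (C2 * ‖x‖) * Real.exp (4 * C2 ^ 2 * t)
            * ((16 * π) ^ (((n - 1 : ℕ) : ℝ) / 2) / (4 * π) ^ ((n : ℝ) / 2)))
            * (t - s) ^ (-(1/2) : ℝ) := by
          rw [hBc]
  -- measurability of the inner integral in `s`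
  have hcontF : ContinuousOn (fun p : ℝ × EuclideanSpace ℝ (Fin (n - 1)) =>
      (g p.1 p.2 - g p.1 x) * Real.exp (-‖x - p.2‖ ^ 2 / (4 * (t - p.1)))
        / ((t - p.1) * (4 * π * (t - p.1)) ^ ((n : ℝ) / 2)))
      (Ioo 0 t ×ˢ (univ : Set (EuclideanSpace ℝ (Fin (n - 1))))) := by
    have h1 : ContinuousOn (fun p : ℝ × EuclideanSpace ℝ (Fin (n - 1)) => g p.1 p.2)
        (Ioo 0 t ×ˢ univ) :=
      (hsmooth.continuousOn).mono (prod_mono Ioo_subset_Icc_self subset_rfl)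
    have h2 : ContinuousOn (fun p : ℝ × EuclideanSpace ℝ (Fin (n - 1)) => g p.1 x)
        (Ioo 0 t ×ˢ univ) :=
      (hsmooth.continuousOn).comp ((continuous_fst.prodMk continuous_const).continuousOn)
        (fun p hp => ⟨Ioo_subset_Icc_self hp.1, mem_univ _⟩)
    apply ContinuousOn.div
    · apply ContinuousOn.mul (h1.sub h2)
      apply Real.continuous_exp.comp_continuousOn
      apply ContinuousOn.div
      · exact (Continuous.continuousOn (by fun_prop))
      · exact (Continuous.continuousOn (by fun_prop))
      · intro p hp
        have : 0 < t - p.1 := sub_pos.2 hp.1.2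
        positivity
    · apply ContinuousOn.mul (Continuous.continuousOn (by fun_prop))
      apply ContinuousOn.rpow_const (Continuous.continuousOn (by fun_prop))
      intro p hp
      have : 0 < t - p.1 := sub_pos.2 hp.1.2
      left
      positivity
    · intro p hp
      exact ne_of_gt (hdenpos p.1 hp.1)
  have hprodmeas : (volume.restrict (Ioo 0 t)).prod
        (volume : Measure (EuclideanSpace ℝ (Fin (n - 1))))
      = ((volume : Measure ℝ).prod volume).restrict
          (Ioo 0 t ×ˢ (univ : Set (EuclideanSpace ℝ (Fin (n - 1))))) := by
    rw [← Measure.prod_restrict, Measure.restrict_univ]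
  have hmeasF : AEStronglyMeasurable (fun p : ℝ × EuclideanSpace ℝ (Fin (n - 1)) =>
      (g p.1 p.2 - g p.1 x) * Real.exp (-‖x - p.2‖ ^ 2 / (4 * (t - p.1)))
        / ((t - p.1) * (4 * π * (t - p.1)) ^ ((n : ℝ) / 2)))
      ((volume.restrict (Ioo 0 t)).prod volume) := by
    rw [hprodmeas]
    exact hcontF.aestronglyMeasurable (measurableSet_Ioo.prod MeasurableSet.univ)
  have hFm := hmeasF.integral_prod_right'
  have hcomp : IntegrableOn (fun s : ℝ =>
      (16 * C2 * Real.exp (C2 * ‖x‖) * Real.exp (4 * C2 ^ 2 * t)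
        * ((16 * π) ^ (((n - 1 : ℕ) : ℝ) / 2) / (4 * π) ^ ((n : ℝ) / 2)))
        * (t - s) ^ (-(1/2) : ℝ)) (Ioo 0 t) := by
    have h1 : IntervalIntegrable (fun u : ℝ => u ^ (-(1/2) : ℝ)) volume 0 t :=
      intervalIntegral.intervalIntegrable_rpow' (by norm_num)
    have h2 := h1.comp_sub_left t
    rw [intervalIntegrable_iff] at h2
    have h3 : Set.uIoc (t - 0) (t - t) = Ioc 0 t := by
      rw [sub_zero, sub_self, Set.uIoc_comm, Set.uIoc_of_le ht.le]
    rw [h3] at h2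
    exact (h2.mono_set Ioo_subset_Ioc_self).const_mul _
  exact Integrable.mono' hcomp hFm
    ((ae_restrict_iff' measurableSet_Ioo).2 (Filter.Eventually.of_forall key))
end

section
/- (Quadratic flux: one-dimensional component of recovered flux) Let x ∈ ℝ and define g(t) = (2/√π)·(x²·√t + (2/3)·t^{3/2}) for t ≥ 0. Then for every t > 0, g(t)/√(πt) + ∫₀ᵗ (g(t) − g(s))/(√(4π)·(t−s)^{3/2}) ds = x² + t. -/
/-!
The temperature history is a combination of the profiles `√t` and `t ^ (3/2)`, so the flux
formula reduces to two Abel-type integrals,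
`∫₀ᵗ (√t - √s) / (t - s)^(3/2) ds = π - 2` and `∫₀ᵗ (t^(3/2) - s^(3/2)) / (t - s)^(3/2) ds = (3π/2 - 2) t`.
Both integrands are nonnegative and have antiderivatives built from `arcsin (√s / √t)` and
`√(t - s) / (√t + √s)`; the latter is `(√t - √s) / √(t - s)` rewritten so that it stays continuous
at `s = t`. The fundamental theorem of calculus on `[0, t]` then gives both integrability and the
values.
-/

open Real MeasureTheory Set

theorem rpow_three_halves {a : ℝ} (ha : 0 ≤ a) : a ^ ((3 : ℝ) / 2) = a * √a := by
  rw [show (3 : ℝ) / 2 = 1 + 1 / 2 by norm_num, rpow_add' ha (by norm_num), rpow_one,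
    ← sqrt_eq_rpow]

theorem integrableOn_Ioo_and_integral_eq_sub_of_hasDerivAt_of_nonneg {f F : ℝ → ℝ} {a b : ℝ}
    (hab : a ≤ b) (hF : ContinuousOn F (Icc a b)) (hderiv : ∀ x ∈ Ioo a b, HasDerivAt F (f x) x)
    (hf : ∀ x ∈ Ioo a b, 0 ≤ f x) :
    IntegrableOn f (Ioo a b) ∧ ∫ x in Ioo a b, f x = F b - F a := by
  have hint := intervalIntegral.integrableOn_deriv_of_nonneg hF hderiv hf
  refine ⟨hint.mono_set Ioo_subset_Ioc_self, ?_⟩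
  rw [← integral_Ioc_eq_integral_Ioo, ← intervalIntegral.integral_of_le hab]
  exact intervalIntegral.integral_eq_sub_of_hasDerivAt_of_le hab hF hderiv
    ((intervalIntegrable_iff_integrableOn_Ioc_of_le hab).2 hint)

section AbelIntegrals

variable {s t : ℝ}

theorem hasDerivAt_arcsin_sqrt_div_sqrt (hs : 0 < s) (hst : s < t) :
    HasDerivAt (fun s => arcsin (√s / √t)) (1 / (2 * √s * √(t - s))) s := by
  have ht : 0 < t := hs.trans hst
  have hlt : √s / √t < 1 := (div_lt_one (sqrt_pos.2 ht)).2 (sqrt_lt_sqrt hs.le hst)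
  have hpos : 0 < √s / √t := div_pos (sqrt_pos.2 hs) (sqrt_pos.2 ht)
  refine ((hasDerivAt_arcsin (by linarith) hlt.ne).comp s
    ((hasDerivAt_sqrt hs.ne').div_const √t)).congr_deriv ?_
  have hcos : 1 - (√s / √t) ^ 2 = (t - s) / t := by
    rw [div_pow, sq_sqrt hs.le, sq_sqrt ht.le]
    field_simp
  rw [hcos, sqrt_div (by linarith : 0 ≤ t - s)]
  field_simp

theorem hasDerivAt_antideriv_sqrt_sub_sqrt_div_rpow (hs : 0 < s) (hst : s < t) :
    HasDerivAt (fun s => 2 * (√(t - s) / (√t + √s)) + 2 * arcsin (√s / √t))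
      ((√t - √s) / (t - s) ^ ((3 : ℝ) / 2)) s := by
  have hts : 0 < t - s := sub_pos.2 hst
  have hsqrt := hasDerivAt_sqrt hs.ne'
  have hsqrt_sub := ((hasDerivAt_id' s).const_sub t).sqrt hts.ne'
  refine (((hsqrt_sub.div (hsqrt.const_add √t) (by positivity)).const_mul 2).add
    ((hasDerivAt_arcsin_sqrt_div_sqrt hs hst).const_mul 2)).congr_deriv ?_
  rw [rpow_three_halves hts.le]
  have ha : 0 < √s := sqrt_pos.2 hs
  have hb : 0 < √t := sqrt_pos.2 (hs.trans hst)
  have hc : 0 < √(t - s) := sqrt_pos.2 hts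
  have ea := sq_sqrt hs.le
  have eb := sq_sqrt (hs.trans hst).le
  have ec := sq_sqrt hts.le
  generalize √(t - s) = c at *
  generalize √s = a at *
  generalize √t = b at *
  subst ea eb
  field_simp
  linear_combination (a ^ 2 - b ^ 2) * ec

theorem hasDerivAt_antideriv_rpow_sub_rpow_div_rpow (hs : 0 < s) (hst : s < t) :
    HasDerivAt
      (fun s => 2 * (√(t - s) * (t + √t * √s + s) / (√t + √s)) + 3 * t * arcsin (√s / √t)
        - 3 * (√s * √(t - s)))
      ((t ^ ((3 : ℝ) / 2) - s ^ ((3 : ℝ) / 2)) / (t - s) ^ ((3 : ℝ) / 2)) s := by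
  have hts : 0 < t - s := sub_pos.2 hst
  have hsqrt := hasDerivAt_sqrt hs.ne'
  have hsqrt_sub := ((hasDerivAt_id' s).const_sub t).sqrt hts.ne'
  have hnum := hsqrt_sub.mul ((hsqrt.const_mul √t).const_add t |>.add (hasDerivAt_id' s))
  refine (((hnum.div (hsqrt.const_add √t) (by positivity)).const_mul 2).add
    ((hasDerivAt_arcsin_sqrt_div_sqrt hs hst).const_mul (3 * t))).sub
    ((hsqrt.mul hsqrt_sub).const_mul 3) |>.congr_deriv ?_
  simp only [Pi.mul_apply, Pi.add_apply]
  rw [rpow_three_halves hts.le, rpow_three_halves hs.le, rpow_three_halves (hs.trans hst).le]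
  have ha : 0 < √s := sqrt_pos.2 hs
  have hb : 0 < √t := sqrt_pos.2 (hs.trans hst)
  have hc : 0 < √(t - s) := sqrt_pos.2 hts
  have ea := sq_sqrt hs.le
  have eb := sq_sqrt (hs.trans hst).le
  have ec := sq_sqrt hts.le
  generalize √(t - s) = c at *
  generalize √s = a at *
  generalize √t = b at *
  subst ea eb
  field_simp
  linear_combination (-3 * b ^ 2 - 2 * a * b - a ^ 2) * (b ^ 2 - a ^ 2) * ec

theorem integral_sqrt_sub_sqrt_div_rpow (ht : 0 < t) :
    IntegrableOn (fun s => (√t - √s) / (t - s) ^ ((3 : ℝ) / 2)) (Ioo 0 t) ∧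
      ∫ s in Ioo 0 t, (√t - √s) / (t - s) ^ ((3 : ℝ) / 2) = π - 2 := by
  have hb : 0 < √t := sqrt_pos.2 ht
  have key := integrableOn_Ioo_and_integral_eq_sub_of_hasDerivAt_of_nonneg ht.le
    (by fun_prop (disch := intro; positivity) :
      Continuous fun s => 2 * (√(t - s) / (√t + √s)) + 2 * arcsin (√s / √t)).continuousOn
    (fun s hs => hasDerivAt_antideriv_sqrt_sub_sqrt_div_rpow hs.1 hs.2)
    (fun s hs => div_nonneg (sub_nonneg.2 (sqrt_le_sqrt hs.2.le))
      (rpow_nonneg (sub_nonneg.2 hs.2.le) _))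
  refine ⟨key.1, key.2.trans ?_⟩
  simp only [sub_self, sub_zero, sqrt_zero, zero_div, mul_zero, add_zero, zero_add,
    div_self hb.ne', arcsin_one, arcsin_zero]
  ring

theorem integral_rpow_sub_rpow_div_rpow (ht : 0 < t) :
    IntegrableOn (fun s => (t ^ ((3 : ℝ) / 2) - s ^ ((3 : ℝ) / 2)) / (t - s) ^ ((3 : ℝ) / 2))
        (Ioo 0 t) ∧
      ∫ s in Ioo 0 t, (t ^ ((3 : ℝ) / 2) - s ^ ((3 : ℝ) / 2)) / (t - s) ^ ((3 : ℝ) / 2)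
        = (3 * π / 2 - 2) * t := by
  have hb : 0 < √t := sqrt_pos.2 ht
  have key := integrableOn_Ioo_and_integral_eq_sub_of_hasDerivAt_of_nonneg ht.le
    (by fun_prop (disch := intro; positivity) :
      Continuous fun s => 2 * (√(t - s) * (t + √t * √s + s) / (√t + √s))
        + 3 * t * arcsin (√s / √t) - 3 * (√s * √(t - s))).continuousOn
    (fun s hs => hasDerivAt_antideriv_rpow_sub_rpow_div_rpow hs.1 hs.2)
    (fun s hs => div_nonneg (sub_nonneg.2 (rpow_le_rpow hs.1.le hs.2.le (by norm_num)))
      (rpow_nonneg (sub_nonneg.2 hs.2.le) _))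
  refine ⟨key.1, key.2.trans ?_⟩
  simp only [sub_self, sub_zero, sqrt_zero, zero_div, zero_mul, mul_zero, add_zero, zero_add,
    div_self hb.ne', arcsin_one, arcsin_zero]
  field_simp

end AbelIntegrals

/-- (Quadratic flux: one-dimensional component of recovered flux) Applying the
one-dimensional temperature-to-flux formula to the temperature history
`g t = (2/√π)(x²√t + (2/3)t^{3/2})` produced by the quadratic flux yields
`x² + t`. -/
theorem quadratic_flux_one_dimensional_component (x : ℝ)
    (g : ℝ → ℝ)
    (hg : ∀ t, 0 ≤ t → g t = 2 / Real.sqrt π * (x ^ 2 * Real.sqrt t + 2 / 3 * t ^ ((3:ℝ)/2))) :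
    ∀ t : ℝ, 0 < t →
      g t / Real.sqrt (π * t)
        + ∫ s in Ioo (0:ℝ) t, (g t - g s) / (Real.sqrt (4 * π) * (t - s) ^ ((3:ℝ)/2))
      = x ^ 2 + t := by
  intro t ht
  obtain ⟨hA, hA_eq⟩ := integral_sqrt_sub_sqrt_div_rpow ht
  obtain ⟨hB, hB_eq⟩ := integral_rpow_sub_rpow_div_rpow ht
  have hπ : √π ^ 2 = π := sq_sqrt pi_pos.le
  have h4π : √(4 * π) = 2 * √π := by
    rw [sqrt_mul zero_le_four, show (4 : ℝ) = 2 ^ 2 by norm_num, sqrt_sq zero_le_two]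
  have hintegrand : EqOn (fun s => (g t - g s) / (√(4 * π) * (t - s) ^ ((3 : ℝ) / 2)))
      (fun s => π⁻¹ * (x ^ 2 * ((√t - √s) / (t - s) ^ ((3 : ℝ) / 2))
        + 2 / 3 * ((t ^ ((3 : ℝ) / 2) - s ^ ((3 : ℝ) / 2)) / (t - s) ^ ((3 : ℝ) / 2))))
      (Ioo 0 t) := by
    intro s hs
    have hkernel : 0 < (t - s) ^ ((3 : ℝ) / 2) := rpow_pos_of_pos (sub_pos.2 hs.2) _
    simp only [hg t ht.le, hg s hs.1.le, h4π]
    field_simp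
    rw [hπ]
    ring
  rw [setIntegral_congr_fun measurableSet_Ioo hintegrand, integral_const_mul,
    integral_add (hA.const_mul _) (hB.const_mul _), integral_const_mul, integral_const_mul,
    hA_eq, hB_eq, hg t ht.le, rpow_three_halves ht.le, sqrt_mul pi_pos.le]
  have hsqrt_t : 0 < √t := sqrt_pos.2 ht
  field_simp
  rw [hπ]
  ring
end

section
/- (Quadratic flux: multi-dimensional component of recovered flux) Let x ∈ ℝ. For every t > 0, ∫₀ᵗ ∫_ℝ (2√s/√π)·(y² − x²) · exp(−(x−y)²/(4(t−s)))/(4π·(t−s)²) dy ds = t. Combined with the one-dimensional component x² + t, the temperature-to-flux formula q = q_{1d} − q_{md} recovers the assumed time-independent quadratic flux q(t,x) = x² exactly. -/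
/-!
For fixed `s`, the heat kernel `exp (-(x - y) ^ 2 / (4 (t - s)))` is `√(4π (t - s))` times the
density of the normal law `𝒩(x, 2 (t - s))`, so the `y`-integral of `y ^ 2 - x ^ 2` against it is
`√(4π (t - s))` times that law's variance `2 (t - s)`. The inner integral is therefore
`(2 / π) √s / √(t - s)`, and the outer integral is the Beta integral
`∫₀ᵗ s ^ (1/2) (t - s) ^ (-1/2) ds = t · B(3/2, 1/2) = π t / 2`.
-/

open Real MeasureTheory Set ProbabilityTheory
open scoped NNReal

lemma integral_sq_sub_sq_gaussianReal (μ : ℝ) (v : ℝ≥0) :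
    ∫ y, (y ^ 2 - μ ^ 2) ∂gaussianReal μ v = v := by
  have hsq : Integrable (fun y : ℝ => y ^ 2) (gaussianReal μ v) :=
    (memLp_id_gaussianReal 2).integrable_sq
  have hvar := variance_eq_sub (memLp_id_gaussianReal (μ := μ) (v := v) 2)
  simp only [Pi.pow_apply, id_eq, variance_id_gaussianReal, integral_id_gaussianReal] at hvar
  rw [integral_sub hsq (integrable_const _), hvar]
  simp

lemma exp_neg_sq_div_four_mul_eq_gaussianPDFReal (x y : ℝ) {a : ℝ} (ha : 0 < a) :
    exp (-(x - y) ^ 2 / (4 * a)) = √(4 * π * a) * gaussianPDFReal x (2 * a).toNNReal y := by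
  rw [gaussianPDFReal_def, Real.coe_toNNReal _ (by positivity), ← mul_assoc,
    show 2 * π * (2 * a) = 4 * π * a by ring, mul_inv_cancel₀ (by positivity), one_mul,
    ← neg_sq (x - y), neg_sub]
  ring_nf

lemma integral_sq_sub_sq_mul_exp_neg_sq_div (x : ℝ) {a : ℝ} (ha : 0 < a) :
    ∫ y, (y ^ 2 - x ^ 2) * exp (-(x - y) ^ 2 / (4 * a)) = 2 * a * √(4 * π * a) := by
  have hv : (2 * a).toNNReal ≠ 0 := by simpa using ha
  simp_rw [exp_neg_sq_div_four_mul_eq_gaussianPDFReal x _ ha, mul_left_comm _ (√(4 * π * a)),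
    integral_const_mul, mul_comm _ (gaussianPDFReal _ _ _), ← smul_eq_mul (gaussianPDFReal _ _ _),
    ← integral_gaussianReal_eq_integral_smul hv, integral_sq_sub_sq_gaussianReal,
    Real.coe_toNNReal _ (by positivity : (0 : ℝ) ≤ 2 * a)]
  ring

lemma integral_Ioo_rpow_mul_sub_rpow {α β a : ℝ} (hα : 0 < α) (hβ : 0 < β) (ha : 0 < a) :
    ∫ x in Ioo 0 a, x ^ (α - 1) * (a - x) ^ (β - 1) = a ^ (α + β - 1) * beta α β := by
  have h := Complex.betaIntegral_scaled α β ha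
  rw [Complex.betaIntegral_eq_Gamma_mul_div _ _ (by simpa) (by simpa)] at h
  rw [← integral_Ioc_eq_integral_Ioo, ← intervalIntegral.integral_of_le ha.le]
  apply Complex.ofReal_injective
  rw [← intervalIntegral.integral_ofReal]
  push_cast [beta, ← Complex.Gamma_ofReal, Complex.ofReal_cpow ha.le]
  rw [← h]
  refine intervalIntegral.integral_congr fun x hx => ?_
  rw [uIcc_of_le ha.le] at hx
  push_cast [Complex.ofReal_cpow hx.1, Complex.ofReal_cpow (sub_nonneg.2 hx.2)]
  rfl

lemma beta_three_halves_one_half : beta (3 / 2) (1 / 2) = π / 2 := by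
  rw [beta, show (3 / 2 : ℝ) = 1 / 2 + 1 by norm_num, Real.Gamma_add_one (by norm_num),
    show (1 / 2 + 1 + 1 / 2 : ℝ) = 1 + 1 by norm_num, Real.Gamma_add_one one_ne_zero,
    Real.Gamma_one, Real.Gamma_one_half_eq]
  field_simp
  rw [sq_sqrt pi_pos.le]

lemma integral_quadratic_flux_heatKernel (x : ℝ) {s t : ℝ} (hs : 0 < s) (hst : s < t) :
    ∫ y : ℝ, 2 * √s / √π * (y ^ 2 - x ^ 2)
        * exp (-(x - y) ^ 2 / (4 * (t - s))) / (4 * π * (t - s) ^ 2)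
      = 2 / π * (s ^ ((3 / 2 : ℝ) - 1) * (t - s) ^ ((1 / 2 : ℝ) - 1)) := by
  have hts : 0 < t - s := sub_pos.2 hst
  calc _ = ∫ y : ℝ, 2 * √s / √π / (4 * π * (t - s) ^ 2)
          * ((y ^ 2 - x ^ 2) * exp (-(x - y) ^ 2 / (4 * (t - s)))) := by
        congr 1 with y; ring
    _ = 2 * √s / √π / (4 * π * (t - s) ^ 2) * (2 * (t - s) * √(4 * π * (t - s))) := by
        rw [integral_const_mul, integral_sq_sub_sq_mul_exp_neg_sq_div x hts]
    _ = _ := by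
        rw [show (3 / 2 : ℝ) - 1 = 1 / 2 by norm_num, show (1 / 2 : ℝ) - 1 = -(1 / 2) by norm_num,
          rpow_neg hts.le, ← sqrt_eq_rpow, ← sqrt_eq_rpow, sqrt_mul' _ hts.le,
          sqrt_mul' _ pi_pos.le, show √4 = 2 by rw [show (4 : ℝ) = 2 ^ 2 by norm_num,
          sqrt_sq zero_le_two]]
        field_simp
        rw [sq_sqrt hts.le]
        ring

/-- (Quadratic flux: multi-dimensional component of recovered flux) The
multi-dimensional component of the temperature-to-flux formula, applied to the
temperature differences `g(s,y) − g(s,x) = (2√s/√π)(y² − x²)` produced by the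
quadratic flux `q = y²` on the half-plane, equals `t`. -/
theorem quadratic_flux_multi_dimensional_component (x : ℝ) :
    ∀ t : ℝ, 0 < t →
      (∫ s in Ioo (0:ℝ) t, ∫ y : ℝ,
          2 * Real.sqrt s / Real.sqrt π * (y ^ 2 - x ^ 2)
            * Real.exp (-(x - y) ^ 2 / (4 * (t - s))) / (4 * π * (t - s) ^ 2))
        = t := by
  intro t ht
  rw [setIntegral_congr_fun measurableSet_Ioo
      fun s hs => integral_quadratic_flux_heatKernel x hs.1 hs.2,
    integral_const_mul, integral_Ioo_rpow_mul_sub_rpow (by norm_num) (by norm_num) ht,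
    beta_three_halves_one_half]
  norm_num
  field_simp
end

section
/- (Gaussian flux, two dimensions) Let x ∈ ℝ. For every t > 0, ∫₀ᵗ ∫_ℝ e^{−y²} · exp(−(x−y)²/(4s))/(2πs) dy ds = (e^{−x²}/√π) · ∫₀ᵗ (1/√(4s² + s)) · exp(4x²s/(4s + 1)) ds. This gives the surface temperature at boundary position x and time t produced by the time-independent Gaussian boundary flux q(s,y) = e^{−y²} on the half-plane. -/
open Real MeasureTheory Set

/-- Completing the square: `a y² + b (x - y)² = (a + b) (y - b x / (a + b))² + a b x² / (a + b)`. -/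
theorem integral_exp_neg_mul_sq_mul_exp_neg_mul_sub_sq {a b : ℝ} (ha : 0 < a) (hb : 0 < b)
    (x : ℝ) :
    ∫ y : ℝ, exp (-a * y ^ 2) * exp (-b * (x - y) ^ 2)
      = sqrt (π / (a + b)) * exp (-(a * b / (a + b)) * x ^ 2) := by
  have hab : a + b ≠ 0 := by positivity
  have complete_square : ∀ y : ℝ, exp (-a * y ^ 2) * exp (-b * (x - y) ^ 2)
      = exp (-(a * b / (a + b)) * x ^ 2) * exp (-(a + b) * (y - b * x / (a + b)) ^ 2) := by
    intro y
    rw [← exp_add, ← exp_add]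
    congr 1
    field_simp
    ring
  simp only [complete_square]
  rw [integral_const_mul, integral_sub_right_eq_self (fun y => exp (-(a + b) * y ^ 2)),
    integral_gaussian, mul_comm]

theorem integral_exp_neg_sq_mul_heatKernel_two_dimensions (x : ℝ) {s : ℝ} (hs : 0 < s) :
    ∫ y : ℝ, exp (-y ^ 2) * exp (-(x - y) ^ 2 / (4 * s)) / (2 * π * s)
      = exp (-x ^ 2) / sqrt π
          * (1 / sqrt (4 * s ^ 2 + s) * exp (4 * x ^ 2 * s / (4 * s + 1))) := by
  have h4s : 0 < 4 * s + 1 := by linarith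
  have hconv := integral_exp_neg_mul_sq_mul_exp_neg_mul_sub_sq one_pos
    (one_div_pos.mpr (by positivity : 0 < 4 * s)) x
  simp only [neg_mul, one_mul, one_div_mul_eq_div] at hconv
  have hsqrt : sqrt (π / (1 + 1 / (4 * s))) * sqrt (4 * s ^ 2 + s) = 2 * sqrt π * s := by
    rw [← sqrt_mul (by positivity), show π / (1 + 1 / (4 * s)) * (4 * s ^ 2 + s) = π * (2 * s) ^ 2
      by field_simp; ring, sqrt_mul pi_pos.le, sqrt_sq (by positivity)]
    ring
  have hexp : 1 / (4 * s) / (1 + 1 / (4 * s)) * x ^ 2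
      = x ^ 2 - 4 * x ^ 2 * s / (4 * s + 1) := by
    field_simp
    ring
  have hsqrt_ne : sqrt (4 * s ^ 2 + s) ≠ 0 := by positivity
  have hsqrt_pi_ne : sqrt π ≠ 0 := by positivity
  rw [integral_div]
  simp only [neg_div]
  rw [hconv, hexp, neg_sub, sub_eq_add_neg, exp_add, eq_div_of_mul_eq hsqrt_ne hsqrt]
  field_simp
  rw [sq_sqrt pi_pos.le]

/-- (Gaussian flux, two dimensions) The surface temperature produced on the
half-plane by the time-independent Gaussian boundary flux `q(s,y) = e^{−y²}`. -/
theorem gaussian_flux_two_dimensions (x : ℝ) :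
    ∀ t : ℝ, 0 < t →
      (∫ s in Ioo (0:ℝ) t, ∫ y : ℝ,
          Real.exp (-y ^ 2) * Real.exp (-(x - y) ^ 2 / (4 * s)) / (2 * π * s))
        = Real.exp (-x ^ 2) / Real.sqrt π
            * ∫ s in Ioo (0:ℝ) t,
                1 / Real.sqrt (4 * s ^ 2 + s) * Real.exp (4 * x ^ 2 * s / (4 * s + 1)) := by
  intro t _
  rw [← integral_const_mul]
  exact setIntegral_congr_fun measurableSet_Ioo fun s hs =>
    integral_exp_neg_sq_mul_heatKernel_two_dimensions x hs.1
end

section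
/- (Gaussian flux, three dimensions) Let x ∈ ℝ². For every t > 0, ∫₀ᵗ ∫_{ℝ²} 2·e^{−|y|²} · exp(−|x−y|²/(4s))/(4πs)^{3/2} dy ds = (e^{−|x|²}/√π) · ∫₀ᵗ (1/(√s·(4s + 1))) · exp(4|x|²s/(4s + 1)) ds. This gives the surface temperature at boundary position x and time t produced by the time-independent Gaussian boundary flux q(s,y) = e^{−|y|²} on the half-space in ℝ³. -/
/-!
The Gaussian flux e^{-|y|²} convolved with the heat kernel e^{-|x-y|²/(4s)} is again a Gaussian
in y after completing the square, so its integral over ℝ² is explicit: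
∫ e^{-|y|²} e^{-|x-y|²/(4s)} dy = (4πs/(4s+1)) e^{-|x|²/(4s+1)}.
Dividing by (4πs)^{3/2} and splitting e^{-|x|²/(4s+1)} = e^{-|x|²} e^{4|x|²s/(4s+1)} gives the
integrand on the right-hand side, pointwise in s.
-/

open Real MeasureTheory Set Module

section GaussianProduct

variable {V : Type*} [NormedAddCommGroup V] [InnerProductSpace ℝ V]

theorem mul_sq_norm_add_mul_sq_norm_sub {p q : ℝ} (hpq : p + q ≠ 0) (x y : V) :
    p * ‖y‖ ^ 2 + q * ‖x - y‖ ^ 2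
      = (p + q) * ‖y - (q / (p + q)) • x‖ ^ 2 + p * q / (p + q) * ‖x‖ ^ 2 := by
  rw [norm_sub_sq_real, norm_sub_sq_real, inner_smul_right, norm_smul, mul_pow,
    Real.norm_eq_abs, sq_abs, real_inner_comm]
  field_simp
  ring

variable [FiniteDimensional ℝ V] [MeasurableSpace V] [BorelSpace V]

theorem integral_exp_neg_mul_sq_norm_mul_exp_neg_mul_sq_norm_sub {p q : ℝ} (hpq : 0 < p + q)
    (x : V) :
    ∫ y : V, exp (-p * ‖y‖ ^ 2) * exp (-q * ‖x - y‖ ^ 2)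
      = (π / (p + q)) ^ (finrank ℝ V / 2 : ℝ) * exp (-(p * q / (p + q)) * ‖x‖ ^ 2) := by
  have hsquare (y : V) : exp (-p * ‖y‖ ^ 2) * exp (-q * ‖x - y‖ ^ 2)
      = exp (-(p * q / (p + q)) * ‖x‖ ^ 2)
        * exp (-(p + q) * ‖y - (q / (p + q)) • x‖ ^ 2) := by
    rw [← exp_add, ← exp_add]
    congr 1
    linear_combination -mul_sq_norm_add_mul_sq_norm_sub hpq.ne' x y
  simp_rw [hsquare]
  rw [integral_const_mul, integral_sub_right_eq_self (fun y : V ↦ exp (-(p + q) * ‖y‖ ^ 2)),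
    GaussianFourier.integral_rexp_neg_mul_sq_norm hpq, mul_comm]

end GaussianProduct

theorem rpow_three_halves_eq_mul_sqrt {a : ℝ} (ha : 0 ≤ a) : a ^ (3 / 2 : ℝ) = a * √a := by
  rw [show (3 / 2 : ℝ) = 1 + 1 / 2 by norm_num, rpow_add' ha (by norm_num), rpow_one,
    ← sqrt_eq_rpow]

theorem integral_gaussian_mul_heatKernel (x : EuclideanSpace ℝ (Fin 2)) {s : ℝ}
    (hs : 0 < s) :
    ∫ y : EuclideanSpace ℝ (Fin 2),
        2 * exp (-‖y‖ ^ 2) * exp (-‖x - y‖ ^ 2 / (4 * s)) / (4 * π * s) ^ ((3:ℝ)/2)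
      = exp (-‖x‖ ^ 2) / √π
          * (1 / (√s * (4 * s + 1)) * exp (4 * ‖x‖ ^ 2 * s / (4 * s + 1))) := by
  have hsum : 0 < 1 + 1 / (4 * s) := by positivity
  have hsqrt : √(4 * π * s) = 2 * √π * √s := by
    rw [sqrt_mul' _ hs.le, sqrt_mul' _ pi_pos.le, show (4 : ℝ) = 2 ^ 2 by norm_num,
      sqrt_sq zero_le_two]
  have hexponent : -(1 * (1 / (4 * s)) / (1 + 1 / (4 * s))) * ‖x‖ ^ 2
      = -‖x‖ ^ 2 + 4 * ‖x‖ ^ 2 * s / (4 * s + 1) := by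
    field_simp
    ring
  calc _ = 2 / (4 * π * s) ^ ((3:ℝ)/2)
          * ∫ y : EuclideanSpace ℝ (Fin 2),
              exp (-1 * ‖y‖ ^ 2) * exp (-(1 / (4 * s)) * ‖x - y‖ ^ 2) := by
        rw [← integral_const_mul]
        congr 1 with y
        ring_nf
    _ = _ := by
      rw [integral_exp_neg_mul_sq_norm_mul_exp_neg_mul_sq_norm_sub hsum, hexponent, exp_add,
        finrank_euclideanSpace_fin, Nat.cast_ofNat, div_self two_ne_zero, rpow_one,
        rpow_three_halves_eq_mul_sqrt (by positivity), hsqrt]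
      field_simp

/-- (Gaussian flux, three dimensions) The surface temperature produced on the
half-space in ℝ³ by the time-independent Gaussian boundary flux
`q(s,y) = e^{−|y|²}`, with the boundary identified with ℝ². -/
theorem gaussian_flux_three_dimensions (x : EuclideanSpace ℝ (Fin 2)) :
    ∀ t : ℝ, 0 < t →
      (∫ s in Ioo (0:ℝ) t, ∫ y : EuclideanSpace ℝ (Fin 2),
          2 * Real.exp (-‖y‖ ^ 2) * Real.exp (-‖x - y‖ ^ 2 / (4 * s))
            / (4 * π * s) ^ ((3:ℝ)/2))
        = Real.exp (-‖x‖ ^ 2) / Real.sqrt π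
            * ∫ s in Ioo (0:ℝ) t,
                1 / (Real.sqrt s * (4 * s + 1)) * Real.exp (4 * ‖x‖ ^ 2 * s / (4 * s + 1)) := by
  intro t _
  rw [← integral_const_mul]
  exact setIntegral_congr_fun measurableSet_Ioo fun s hs ↦
    integral_gaussian_mul_heatKernel x hs.1
end
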